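/- arXiv:2506.09328 — 4 statements merged into one kernel-verified Lean document; each statement's English description precedes it below -/
import Mathlib

section
/- Let E, F be Banach spaces, g : F → E continuously Fréchet differentiable in a neighborhood of x ∈ F, and f : E → R Lipschitz on a neighborhood of g(x). Then the Clarke subdifferential of the composition satisfies the chain-rule inclusion ∂_C(f ∘ g)(x) ⊆ (d_x g)*[∂_C f(g(x))], i.e. every ζ ∈ ∂_C(f∘g)(x) is of the form (d_x g)* ξ for some ξ ∈ ∂_C f(g(x)). -/
/- Near `g x` the Clarke derivative `f°(y; ·)` of the Lipschitz function `f` is positively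
homogeneous, subadditive and bounded by `K‖·‖`. Strict differentiability of `g` replaces the
increment `g (a + τ • v) - g a` by `τ • g' x v` up to `o(τ)`, an error the Lipschitz bound on `f`
absorbs, so `(f ∘ g)°(x; v) ≤ f°(g x; g' x v)`. Hence `ζ` vanishes on `ker (g' x)`, descends to a
functional on the range of `g' x` dominated by the sublinear `f°(g x; ·)`, and Hahn–Banach extends
it to all of `E`; the extension is continuous because it is dominated by `K‖·‖`. -/

open Filter Topology

variable {E F : Type*} [NormedAddCommGroup E] [NormedSpace ℝ E]
  [NormedAddCommGroup F] [NormedSpace ℝ F]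

/-- The Clarke directional derivative
`f°(x;v) = limsup_{x̃→x, τ↓0} (f(x̃+τv) − f(x̃))/τ`. -/
noncomputable def clarkeDeriv (f : E → ℝ) (x v : E) : ℝ :=
  Filter.limsup (fun p : E × ℝ => (f (p.1 + p.2 • v) - f p.1) / p.2)
    ((𝓝 x) ×ˢ (𝓝[>] (0 : ℝ)))

/-- The Clarke subdifferential `∂_C f(x) = {ξ ∈ E* : ⟨ξ,v⟩ ≤ f°(x;v) ∀ v}`. -/
def clarkeSubdiff (f : E → ℝ) (x : E) : Set (E →L[ℝ] ℝ) :=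
  {ξ | ∀ v : E, ξ v ≤ clarkeDeriv f x v}

lemma isBoundedUnder_of_eventually_abs_le {α : Type*} {l : Filter α} {u : α → ℝ} {c : ℝ}
    (h : ∀ᶠ a in l, |u a| ≤ c) :
    IsBoundedUnder (· ≤ ·) l u ∧ IsBoundedUnder (· ≥ ·) l u :=
  isBoundedUnder_le_abs.1 (isBoundedUnder_of_eventually_le h)

lemma tendsto_fst_add_snd_smul (x v : E) :
    Tendsto (fun p : E × ℝ => p.1 + p.2 • v) (𝓝 x ×ˢ 𝓝[>] (0 : ℝ)) (𝓝 x) := by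
  have hτ : Tendsto (fun p : E × ℝ => p.2) (𝓝 x ×ˢ 𝓝[>] (0 : ℝ)) (𝓝 0) :=
    tendsto_snd.mono_right nhdsWithin_le_nhds
  simpa using tendsto_fst.add (hτ.smul_const v)

lemma LipschitzOnWith.abs_sub_div_le {f : E → ℝ} {K : NNReal} {V : Set E}
    (hf : LipschitzOnWith K f V) {a b : E} (ha : a ∈ V) (hb : b ∈ V) {τ : ℝ} (hτ : 0 < τ) :
    |(f a - f b) / τ| ≤ K * ‖τ⁻¹ • (a - b)‖ := by
  have h := hf.dist_le_mul a ha b hb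
  rw [dist_eq_norm, dist_eq_norm, Real.norm_eq_abs] at h
  rw [abs_div, abs_of_pos hτ, norm_smul, norm_inv, Real.norm_of_nonneg hτ.le, ← mul_assoc,
    mul_comm _ τ⁻¹, mul_assoc, ← div_eq_inv_mul]
  gcongr

noncomputable def clarkeQuot (f : E → ℝ) (v : E) (p : E × ℝ) : ℝ :=
  (f (p.1 + p.2 • v) - f p.1) / p.2

lemma clarkeDeriv_eq_limsup (f : E → ℝ) (x v : E) :
    clarkeDeriv f x v = limsup (clarkeQuot f v) (𝓝 x ×ˢ 𝓝[>] (0 : ℝ)) := rfl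

section Lipschitz

variable {f : E → ℝ} {K : NNReal} {V : Set E} {y : E}

lemma eventually_abs_clarkeQuot_le (hV : V ∈ 𝓝 y) (hf : LipschitzOnWith K f V) (v : E) :
    ∀ᶠ p in 𝓝 y ×ˢ 𝓝[>] (0 : ℝ), |clarkeQuot f v p| ≤ K * ‖v‖ := by
  filter_upwards [tendsto_fst_add_snd_smul y v hV, tendsto_fst hV,
    tendsto_snd self_mem_nhdsWithin] with p hpv hp (hτ : 0 < p.2)
  simpa [clarkeQuot, inv_smul_smul₀ hτ.ne'] using hf.abs_sub_div_le hpv hp hτ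

lemma clarkeDeriv_le_mul_norm (hV : V ∈ 𝓝 y) (hf : LipschitzOnWith K f V) (v : E) :
    clarkeDeriv f y v ≤ K * ‖v‖ := by
  have hb := eventually_abs_clarkeQuot_le hV hf v
  exact limsup_le_of_le (isBoundedUnder_of_eventually_abs_le hb).2.isCoboundedUnder_le
    (hb.mono fun _ h => (abs_le.1 h).2)

lemma limsup_clarkeQuot_comp_le {α : Type*} {l : Filter α} [l.NeBot] {m : α → E × ℝ}
    (hm : Tendsto m l (𝓝 y ×ˢ 𝓝[>] (0 : ℝ))) (hV : V ∈ 𝓝 y) (hf : LipschitzOnWith K f V)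
    (v : E) : limsup (clarkeQuot f v ∘ m) l ≤ clarkeDeriv f y v := by
  have hb := eventually_abs_clarkeQuot_le hV hf v
  exact hm.limsup_comp_le_limsup
    (isBoundedUnder_of_eventually_abs_le (hm.eventually hb)).2.isCoboundedUnder_le
    (isBoundedUnder_of_eventually_abs_le hb).1

lemma clarkeDeriv_add_le (hV : V ∈ 𝓝 y) (hf : LipschitzOnWith K f V) (v w : E) :
    clarkeDeriv f y (v + w) ≤ clarkeDeriv f y v + clarkeDeriv f y w := by
  set m : E × ℝ → E × ℝ := fun p => (p.1 + p.2 • w, p.2)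
  have hm : Tendsto m (𝓝 y ×ˢ 𝓝[>] (0 : ℝ)) (𝓝 y ×ˢ 𝓝[>] (0 : ℝ)) :=
    (tendsto_fst_add_snd_smul y w).prodMk tendsto_snd
  have hsplit : clarkeQuot f (v + w) = clarkeQuot f v ∘ m + clarkeQuot f w := by
    ext p
    simp only [clarkeQuot, m, Function.comp_apply, Pi.add_apply, smul_add, ← add_div,
      sub_add_sub_cancel]
    rw [add_comm (p.2 • v), add_assoc]
  have hbv := isBoundedUnder_of_eventually_abs_le (hm.eventually
    (eventually_abs_clarkeQuot_le hV hf v))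
  have hbw := isBoundedUnder_of_eventually_abs_le (eventually_abs_clarkeQuot_le hV hf w)
  rw [clarkeDeriv_eq_limsup, hsplit]
  exact (limsup_add_le hbv.2 hbv.1 hbw.2.isCoboundedUnder_le hbw.1).trans
    (add_le_add_left (limsup_clarkeQuot_comp_le hm hV hf v) _)

lemma clarkeDeriv_smul_le (hV : V ∈ 𝓝 y) (hf : LipschitzOnWith K f V) {c : ℝ} (hc : 0 < c)
    (v : E) : clarkeDeriv f y (c • v) ≤ c * clarkeDeriv f y v := by
  set m : E × ℝ → E × ℝ := fun p => (p.1, c * p.2)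
  have hm : Tendsto m (𝓝 y ×ˢ 𝓝[>] (0 : ℝ)) (𝓝 y ×ˢ 𝓝[>] (0 : ℝ)) :=
    tendsto_fst.prodMk ((tendsto_iff_comap.2 (comap_mulLeft_nhdsGT_zero hc).ge).comp tendsto_snd)
  have hscale : clarkeQuot f (c • v) = (c * ·) ∘ (clarkeQuot f v ∘ m) := by
    ext p
    simp only [clarkeQuot, m, Function.comp_apply, smul_smul, mul_comm p.2 c]
    rw [mul_div_assoc', mul_div_mul_left _ _ hc.ne']
  have hb := isBoundedUnder_of_eventually_abs_le (hm.eventually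
    (eventually_abs_clarkeQuot_le hV hf v))
  calc clarkeDeriv f y (c • v)
      = limsup ((c * ·) ∘ (clarkeQuot f v ∘ m)) (𝓝 y ×ˢ 𝓝[>] (0 : ℝ)) := by
        rw [clarkeDeriv_eq_limsup, hscale]
    _ = c * limsup (clarkeQuot f v ∘ m) (𝓝 y ×ˢ 𝓝[>] (0 : ℝ)) :=
        ((monotone_mul_left_of_nonneg hc.le).map_limsup_of_continuousAt _
          (continuous_const_mul c).continuousAt hb.1 hb.2.isCoboundedUnder_le).symm
    _ ≤ c * clarkeDeriv f y v := by
        gcongr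
        exact limsup_clarkeQuot_comp_le hm hV hf v

lemma clarkeDeriv_smul (hV : V ∈ 𝓝 y) (hf : LipschitzOnWith K f V) {c : ℝ} (hc : 0 < c)
    (v : E) : clarkeDeriv f y (c • v) = c * clarkeDeriv f y v := by
  refine le_antisymm (clarkeDeriv_smul_le hV hf hc v) ?_
  have h := clarkeDeriv_smul_le hV hf (inv_pos.2 hc) (c • v)
  rw [inv_smul_smul₀ hc.ne'] at h
  calc c * clarkeDeriv f y v ≤ c * (c⁻¹ * clarkeDeriv f y (c • v)) := by gcongr
    _ = clarkeDeriv f y (c • v) := mul_inv_cancel_left₀ hc.ne' _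

end Lipschitz

lemma HasStrictFDerivAt.tendsto_inv_smul_sub {g : F → E} {A : F →L[ℝ] E} {x : F}
    (hg : HasStrictFDerivAt g A x) (v : F) :
    Tendsto (fun p : F × ℝ => p.2⁻¹ • (g (p.1 + p.2 • v) - g p.1)) (𝓝 x ×ˢ 𝓝[>] (0 : ℝ))
      (𝓝 (A v)) := by
  have hpair : Tendsto (fun p : F × ℝ => (p.1 + p.2 • v, p.1)) (𝓝 x ×ˢ 𝓝[>] (0 : ℝ))
      (𝓝 (x, x)) :=
    (tendsto_fst_add_snd_smul x v).prodMk_nhds tendsto_fst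
  have hsmul : (fun p : F × ℝ => p.2 • v) =O[𝓝 x ×ˢ 𝓝[>] (0 : ℝ)] fun p => p.2 :=
    Asymptotics.IsBigO.of_bound ‖v‖ (Eventually.of_forall fun p => by rw [norm_smul, mul_comm])
  have hlittle : (fun p : F × ℝ => g (p.1 + p.2 • v) - g p.1 - p.2 • A v)
      =o[𝓝 x ×ˢ 𝓝[>] (0 : ℝ)] fun p => p.2 := by
    refine (((hasStrictFDerivAt_iff_isLittleO.1 hg).comp_tendsto hpair).congr
      (fun p => ?_) (fun p => ?_)).trans_isBigO hsmul <;> simp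
  have hlim := hlittle.tendsto_inv_smul_nhds_zero.add_const (A v)
  rw [zero_add] at hlim
  refine hlim.congr' ?_
  filter_upwards [tendsto_snd self_mem_nhdsWithin] with p (hτ : 0 < p.2)
  rw [smul_sub, inv_smul_smul₀ hτ.ne', sub_add_cancel]

theorem clarkeDeriv_comp_le {f : E → ℝ} {K : NNReal} {V : Set E} {g : F → E}
    {A : F →L[ℝ] E} {x : F} (hg : HasStrictFDerivAt g A x) (hV : V ∈ 𝓝 (g x))
    (hf : LipschitzOnWith K f V) (v : F) :
    clarkeDeriv (f ∘ g) x v ≤ clarkeDeriv f (g x) (A v) := by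
  set L := 𝓝 x ×ˢ 𝓝[>] (0 : ℝ)
  set m : F × ℝ → E × ℝ := fun p => (g p.1, p.2)
  have hm : Tendsto m L (𝓝 (g x) ×ˢ 𝓝[>] (0 : ℝ)) :=
    (hg.continuousAt.tendsto.comp tendsto_fst).prodMk tendsto_snd
  set err : F × ℝ → ℝ := fun p => (f (g (p.1 + p.2 • v)) - f (g p.1 + p.2 • A v)) / p.2
  have hsplit : clarkeQuot (f ∘ g) v = clarkeQuot f (A v) ∘ m + err := by
    ext p
    simp only [clarkeQuot, m, err, Function.comp_apply, Pi.add_apply, ← add_div,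
      sub_add_sub_cancel']
  have herr : Tendsto err L (𝓝 0) := by
    have hslope := (hg.tendsto_inv_smul_sub v).sub_const (A v)
    rw [sub_self] at hslope
    refine squeeze_zero_norm' ?_ (by simpa using hslope.norm.const_mul (K : ℝ))
    filter_upwards [(hg.continuousAt.tendsto.comp (tendsto_fst_add_snd_smul x v)) hV,
      ((tendsto_fst_add_snd_smul (g x) (A v)).comp hm) hV,
      tendsto_snd self_mem_nhdsWithin] with p (h₁ : g (p.1 + p.2 • v) ∈ V)
      (h₂ : g p.1 + p.2 • A v ∈ V) (hτ : 0 < p.2)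
    have h := hf.abs_sub_div_le h₁ h₂ hτ
    rwa [sub_add_eq_sub_sub, smul_sub _ (_ - _), inv_smul_smul₀ hτ.ne'] at h
  have hb := isBoundedUnder_of_eventually_abs_le
    (hm.eventually (eventually_abs_clarkeQuot_le hV hf (A v)))
  calc clarkeDeriv (f ∘ g) x v = limsup (clarkeQuot f (A v) ∘ m + err) L := by
        rw [clarkeDeriv_eq_limsup, hsplit]
    _ ≤ limsup (clarkeQuot f (A v) ∘ m) L + limsup err L :=
        limsup_add_le hb.2 hb.1 herr.isBoundedUnder_ge.isCoboundedUnder_le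
          herr.isBoundedUnder_le
    _ ≤ clarkeDeriv f (g x) (A v) := by
        rw [herr.limsup_eq, add_zero]
        exact limsup_clarkeQuot_comp_le hm hV hf (A v)

theorem exists_dual_comp_eq_of_le_sublinear {N : E → ℝ} {C : ℝ}
    (hN_smul : ∀ c : ℝ, 0 < c → ∀ w, N (c • w) = c * N w)
    (hN_add : ∀ w₁ w₂, N (w₁ + w₂) ≤ N w₁ + N w₂) (hN_le : ∀ w, N w ≤ C * ‖w‖)
    (A : F →L[ℝ] E) (ζ : F →L[ℝ] ℝ) (hζ : ∀ v, ζ v ≤ N (A v)) :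
    ∃ ξ : E →L[ℝ] ℝ, (∀ w, ξ w ≤ N w) ∧ ζ = ξ.comp A := by
  have hN_zero : N 0 ≤ 0 := by simpa using hN_le 0
  have hker : LinearMap.ker (A : F →ₗ[ℝ] E) ≤ LinearMap.ker (ζ : F →ₗ[ℝ] ℝ) := by
    intro v hv
    rw [LinearMap.mem_ker, ContinuousLinearMap.coe_coe] at hv ⊢
    have h₁ := hζ v
    have h₂ := hζ (-v)
    simp only [map_neg, hv, neg_zero] at h₁ h₂
    linarith
  set ξ₀ : LinearMap.range (A : F →ₗ[ℝ] E) →ₗ[ℝ] ℝ :=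
    (LinearMap.ker (A : F →ₗ[ℝ] E)).liftQ ζ hker ∘ₗ
      ((A : F →ₗ[ℝ] E).quotKerEquivRange.symm : _ →ₗ[ℝ] _)
  have hξ₀ : ∀ v, ξ₀ ⟨A v, LinearMap.mem_range_self _ v⟩ = ζ v := fun v => by
    simpa [ξ₀] using congrArg ((LinearMap.ker (A : F →ₗ[ℝ] E)).liftQ (ζ : F →ₗ[ℝ] ℝ) hker)
      ((A : F →ₗ[ℝ] E).quotKerEquivRange_symm_apply_image v (LinearMap.mem_range_self _ v))
  obtain ⟨ξ, hξ_ext, hξN⟩ := exists_extension_of_le_sublinear ⟨_, ξ₀⟩ N hN_smul hN_add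
    (by rintro ⟨_, v, rfl⟩; exact (hξ₀ v).trans_le (hζ v))
  have hξ_bound : ∀ w, ‖ξ w‖ ≤ C * ‖w‖ := fun w => by
    have h := (hξN (-w)).trans (hN_le (-w))
    rw [map_neg, norm_neg] at h
    exact abs_le.2 ⟨by linarith, (hξN w).trans (hN_le w)⟩
  refine ⟨ξ.mkContinuous C hξ_bound, hξN, ?_⟩
  ext v
  exact ((hξ_ext ⟨A v, LinearMap.mem_range_self _ v⟩).trans (hξ₀ v)).symm

theorem exists_mem_clarkeSubdiff_comp_eq {f : E → ℝ} {K : NNReal} {V : Set E} {g : F → E}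
    {A : F →L[ℝ] E} {x : F} (hg : HasStrictFDerivAt g A x) (hV : V ∈ 𝓝 (g x))
    (hf : LipschitzOnWith K f V) {ζ : F →L[ℝ] ℝ} (hζ : ζ ∈ clarkeSubdiff (f ∘ g) x) :
    ∃ ξ ∈ clarkeSubdiff f (g x), ζ = ξ.comp A :=
  exists_dual_comp_eq_of_le_sublinear (fun _ hc w => clarkeDeriv_smul hV hf hc w)
    (clarkeDeriv_add_le hV hf) (clarkeDeriv_le_mul_norm hV hf) A ζ
    (fun v => (hζ v).trans (clarkeDeriv_comp_le hg hV hf v))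

theorem clarke_chain_rule (g : F → E) (x : F) (g' : F → F →L[ℝ] E)
    (hg : ∀ᶠ y in 𝓝 x, HasFDerivAt g (g' y) y) (hg' : ContinuousAt g' x)
    (f : E → ℝ) (K : NNReal) (V : Set E) (hV : V ∈ 𝓝 (g x))
    (hf : LipschitzOnWith K f V) :
    ∀ ζ ∈ clarkeSubdiff (f ∘ g) x,
      ∃ ξ ∈ clarkeSubdiff f (g x), ζ = ξ.comp (g' x) := fun _ hζ =>
  exists_mem_clarkeSubdiff_comp_eq (hasStrictFDerivAt_of_hasFDerivAt_of_continuousAt hg hg')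
    hV hf hζ
end

section
/- Let M be a closed Riemannian manifold, {μₑ} ⊂ M_c(M) a sequence of nonatomic Radon measures with μₑ → μ weak-* and λ_k(μₑ) ≡ 1 for a fixed k ≥ 1. Then the set of unstable points of the sequence {μₑ} contains at most k distinct points. -/
/-!
Negative directions of `Q_{μₑ}` around distinct unstable points can be chosen with pairwise
disjoint supports, all for the same `ε`. On their span both `∫ |dφ|² dv` and `∫ φ² dμₑ` split
as the corresponding weighted sums over the generators, so the Rayleigh quotient of every
element of the span is at most the largest quotient of a generator, which is `< 1`. If there
were `k + 1` unstable points, this span would witness `λ_k(μₑ) < 1`.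
-/

open MeasureTheory Filter Topology
open scoped Manifold

noncomputable section

/-- Euclidean model space. -/
abbrev Euc (m : ℕ) := EuclideanSpace ℝ (Fin m)

/-- The squared Riemannian norm `|dφ|²_g(x)` of the differential of `φ` at `x`,
computed from the (inverse) metric `gInv` acting on cotangent vectors via the
Euclidean identification of tangent spaces. -/
def gradSqG {m : ℕ} {M : Type*} [TopologicalSpace M] [ChartedSpace (Euc m) M]
    (gInv : M → Euc m →L[ℝ] Euc m) (φ : M → ℝ) (x : M) : ℝ :=
  (mfderiv (𝓡 m) 𝓘(ℝ, ℝ) φ x : Euc m →L[ℝ] ℝ)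
    (gInv x ((InnerProductSpace.toDual ℝ (Euc m)).symm
      (mfderiv (𝓡 m) 𝓘(ℝ, ℝ) φ x : Euc m →L[ℝ] ℝ)))

/-- `φ ∈ C^∞(M)`. -/
def SmoothFn (m : ℕ) {M : Type*} [TopologicalSpace M] [ChartedSpace (Euc m) M] (φ : M → ℝ) : Prop :=
  ContMDiff (𝓡 m) 𝓘(ℝ, ℝ) (⊤ : ℕ∞) φ

/-- The quadratic form `Q_μ(φ) = ∫ |dφ|²_g dv_g − ∫ φ² dμ`. -/
def Qform {m : ℕ} {M : Type*} [TopologicalSpace M] [ChartedSpace (Euc m) M] [MeasurableSpace M]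
    (vol μ : Measure M) (gInv : M → Euc m →L[ℝ] Euc m) (φ : M → ℝ) : ℝ :=
  (∫ x, gradSqG gInv φ x ∂vol) - ∫ x, (φ x) ^ 2 ∂μ

/-- `ind(μ, Ω) = 0`: the form `Q_μ` is nonnegative on `C₀^∞(Ω)`. -/
def IndexZero {m : ℕ} {M : Type*} [TopologicalSpace M] [ChartedSpace (Euc m) M] [MeasurableSpace M]
    (vol μ : Measure M) (gInv : M → Euc m →L[ℝ] Euc m) (Ω : Set M) : Prop :=
  ∀ φ : M → ℝ, SmoothFn m φ → tsupport φ ⊆ Ω → 0 ≤ Qform vol μ gInv φ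

/-- The variational eigenvalue
`λ_k(μ) = inf_{F_{k+1} ⊂ C^∞(M)} sup_{φ ∈ F_{k+1}} (∫|dφ|²_g dv_g)/(∫φ² dμ)`. -/
def lambdaK {m : ℕ} {M : Type*} [TopologicalSpace M] [ChartedSpace (Euc m) M] [MeasurableSpace M]
    (vol : Measure M) (gInv : M → Euc m →L[ℝ] Euc m) (k : ℕ) (μ : Measure M) : ℝ :=
  sInf {r : ℝ | ∃ F : Submodule ℝ (M → ℝ), Module.finrank ℝ F = k + 1 ∧
    (∀ φ ∈ F, SmoothFn m φ) ∧
    r = sSup {s : ℝ | ∃ φ ∈ F,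
      s = (∫ x, gradSqG gInv φ x ∂vol) / ∫ x, (φ x) ^ 2 ∂μ}}

/-- Weak-* convergence of measures (testing against continuous functions). -/
def WeakStarMeas {M : Type*} [TopologicalSpace M] [MeasurableSpace M]
    (μs : ℕ → Measure M) (μ : Measure M) : Prop :=
  ∀ f : M → ℝ, Continuous f →
    Tendsto (fun n => ∫ x, f x ∂(μs n)) atTop (𝓝 (∫ x, f x ∂μ))

/-- `p` is a stable point for the sequence `{μₑ}`: some neighborhood `Ω` of `p` has
`ind(μₑ, Ω) = 0` along a subsequence. -/
def StablePt {m : ℕ} {M : Type*} [TopologicalSpace M] [ChartedSpace (Euc m) M] [MeasurableSpace M]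
    (vol : Measure M) (gInv : M → Euc m →L[ℝ] Euc m) (μs : ℕ → Measure M) (p : M) : Prop :=
  ∃ Ω : Set M, IsOpen Ω ∧ p ∈ Ω ∧
    ∃ ψ : ℕ → ℕ, StrictMono ψ ∧ ∀ j, IndexZero vol (μs (ψ j)) gInv Ω

end

open Function

section DisjointSupports

variable {ι X : Type*} [Fintype ι]

theorem linearIndependent_of_pairwise_disjoint_support {R : Type*} [CommRing R] [NoZeroDivisors R]
    {f : ι → X → R} (hne : ∀ i, f i ≠ 0) (hdisj : Pairwise (Disjoint on fun i => support (f i))) :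
    LinearIndependent R f := by
  rw [Fintype.linearIndependent_iff]
  intro a hsum i
  obtain ⟨x, hx⟩ := Function.ne_iff.1 (hne i)
  have hsum_x : ∑ j, a j * f j x = a i * f i x := Finset.sum_eq_single i
    (fun j _ hji => by
      rw [notMem_support.1 fun hj => Set.disjoint_left.mp (hdisj hji) hj hx, mul_zero])
    (by simp)
  have := congrFun hsum x
  simp only [Finset.sum_apply, Pi.smul_apply, smul_eq_mul, Pi.zero_apply, hsum_x] at this
  exact (mul_eq_zero.1 this).resolve_right hx

theorem integral_sum_of_pairwise_disjoint {E : Type*} [MeasurableSpace X] {μ : Measure X}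
    [NormedAddCommGroup E] [NormedSpace ℝ E] {g : ι → X → E} {s : ι → Set X}
    (hs : ∀ i, MeasurableSet (s i)) (hdisj : Pairwise (Disjoint on s))
    (hg : ∀ i, ∀ x ∉ s i, g i x = 0) (hint : Integrable (fun x => ∑ i, g i x) μ) :
    ∫ x, ∑ i, g i x ∂μ = ∑ i, ∫ x, g i x ∂μ := by
  have hind : ∀ i, (s i).indicator (fun x => ∑ j, g j x) = g i := by
    intro i
    funext x
    by_cases hx : x ∈ s i
    · rw [Set.indicator_of_mem hx]
      exact Finset.sum_eq_single i
        (fun j _ hji => hg j x fun hj => Set.disjoint_left.mp (hdisj hji) hj hx) (by simp)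
    · rw [Set.indicator_of_notMem hx, hg i x hx]
  exact integral_finsetSum _ fun i _ => hind i ▸ hint.indicator (hs i)

variable [TopologicalSpace X]

theorem exists_forall_ne_notMem_tsupport {β : Type*} [Zero β] [Nonempty ι] {f : ι → X → β}
    (hdisj : Pairwise (Disjoint on fun i => tsupport (f i))) (x : X) :
    ∃ i, ∀ j ≠ i, x ∉ tsupport (f j) := by
  by_cases h : ∃ i, x ∈ tsupport (f i)
  · obtain ⟨i, hi⟩ := h
    exact ⟨i, fun j hji hj => Set.disjoint_left.mp (hdisj hji) hj hi⟩
  · exact ⟨Classical.arbitrary ι, fun j _ hj => h ⟨j, hj⟩⟩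

theorem sum_eventuallyEq_of_forall_ne_notMem_tsupport {β : Type*} [AddCommMonoid β]
    {f : ι → X → β} {x : X} {i : ι} (h : ∀ j ≠ i, x ∉ tsupport (f j)) :
    (∑ j, f j) =ᶠ[𝓝 x] f i := by
  have hzero : ∀ᶠ y in 𝓝 x, ∀ j, j ≠ i → f j y = 0 :=
    Filter.eventually_all.2 fun j => by
      by_cases hji : j = i
      · exact Filter.Eventually.of_forall fun _ h => absurd hji h
      · exact (notMem_tsupport_iff_eventuallyEq.1 (h j hji)).mono fun y hy _ => hy
  filter_upwards [hzero] with y hy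
  rw [Finset.sum_apply]
  exact Finset.sum_eq_single i (fun j _ hji => hy j hji) (by simp)

theorem sum_smul_apply_sq_of_pairwise_disjoint [Nonempty ι] {Φ : ι → X → ℝ}
    (hdisj : Pairwise (Disjoint on fun i => tsupport (Φ i))) (a : ι → ℝ) (x : X) :
    (∑ j, a j • Φ j) x ^ 2 = ∑ j, a j ^ 2 * Φ j x ^ 2 := by
  obtain ⟨i, hi⟩ := exists_forall_ne_notMem_tsupport hdisj x
  have hzero : ∀ j ≠ i, Φ j x = 0 := fun j hj => image_eq_zero_of_notMem_tsupport (hi j hj)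
  rw [Finset.sum_apply, Finset.sum_eq_single i (fun j _ hj => by simp [hzero j hj]) (by simp),
    Finset.sum_eq_single i (fun j _ hj => by simp [hzero j hj]) (by simp),
    Pi.smul_apply, smul_eq_mul, mul_pow]

end DisjointSupports

theorem exists_lt_one_forall_le_mul {ι : Type*} [Finite ι] [Nonempty ι] {n d : ι → ℝ}
    (hd : ∀ i, 0 ≤ d i) (hnd : ∀ i, n i < d i) :
    ∃ c, 0 ≤ c ∧ c < 1 ∧ ∀ i, n i ≤ c * d i := by
  obtain ⟨i₀, hi₀⟩ := Finite.exists_max fun i => n i / d i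
  refine ⟨max 0 (n i₀ / d i₀), le_max_left _ _, max_lt one_pos ?_, fun i => ?_⟩
  · rcases (hd i₀).eq_or_lt with h | h
    · rw [← h, div_zero]
      exact one_pos
    · exact (div_lt_one h).2 (hnd i₀)
  · rcases (hd i).eq_or_lt with h | h
    · rw [← h, mul_zero]
      exact ((hnd i).trans_eq h.symm).le
    · exact ((div_le_iff₀ h).1 (hi₀ i)).trans (mul_le_mul_of_nonneg_right (le_max_right _ _) h.le)

theorem apply_toDual_symm_smul {E : Type*} [NormedAddCommGroup E] [InnerProductSpace ℝ E]
    [CompleteSpace E] (A : E →L[ℝ] E) (D : StrongDual ℝ E) (c : ℝ) :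
    (c • D) (A ((InnerProductSpace.toDual ℝ E).symm (c • D)))
      = c ^ 2 * D (A ((InnerProductSpace.toDual ℝ E).symm D)) := by
  simp only [FunLike.coe_smul, Pi.smul_apply, map_smul, smul_eq_mul]
  ring

section Rayleigh

variable {m : ℕ} {M : Type*} [TopologicalSpace M] [ChartedSpace (Euc m) M]
  (gInv : M → Euc m →L[ℝ] Euc m)

theorem gradSqG_congr {f g : M → ℝ} {x : M} (h : f =ᶠ[𝓝 x] g) :
    gradSqG gInv f x = gradSqG gInv g x := by
  rw [gradSqG, h.mfderiv_eq]
  rfl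

theorem gradSqG_eq_zero_of_eventuallyEq_zero {f : M → ℝ} {x : M} (h : f =ᶠ[𝓝 x] 0) :
    gradSqG gInv f x = 0 := by
  have h' : f =ᶠ[𝓝 x] fun _ => (0 : ℝ) := h
  rw [gradSqG_congr gInv h', gradSqG, mfderiv_const]
  rfl

theorem gradSqG_eq_zero_of_notMem_tsupport {f : M → ℝ} {x : M} (hx : x ∉ tsupport f) :
    gradSqG gInv f x = 0 :=
  gradSqG_eq_zero_of_eventuallyEq_zero gInv (notMem_tsupport_iff_eventuallyEq.1 hx)

theorem gradSqG_smul {f : M → ℝ} {x : M} (hf : MDifferentiableAt (𝓡 m) 𝓘(ℝ, ℝ) f x) (c : ℝ) :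
    gradSqG gInv (c • f) x = c ^ 2 * gradSqG gInv f x := by
  rw [gradSqG, (hf.hasMFDerivAt.const_smul c).mfderiv]
  exact apply_toDual_symm_smul (gInv x) _ c

theorem Qform_zero [MeasurableSpace M] (vol μ : Measure M) : Qform vol μ gInv 0 = 0 := by
  simp [Qform, gradSqG_eq_zero_of_eventuallyEq_zero gInv (Filter.EventuallyEq.refl _ _)]

variable {ι : Type*} [Fintype ι] {Φ : ι → M → ℝ}

theorem gradSqG_sum_smul [Nonempty ι] (hΦ : ∀ j, MDifferentiable (𝓡 m) 𝓘(ℝ, ℝ) (Φ j))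
    (hdisj : Pairwise (Disjoint on fun i => tsupport (Φ i))) (a : ι → ℝ) (x : M) :
    gradSqG gInv (∑ j, a j • Φ j) x = ∑ j, a j ^ 2 * gradSqG gInv (Φ j) x := by
  obtain ⟨i, hi⟩ := exists_forall_ne_notMem_tsupport hdisj x
  have hloc : (∑ j, a j • Φ j) =ᶠ[𝓝 x] a i • Φ i :=
    sum_eventuallyEq_of_forall_ne_notMem_tsupport fun j hj hx =>
      hi j hj (tsupport_smul_subset_right (fun _ => a j) (Φ j) hx)
  rw [gradSqG_congr gInv hloc, gradSqG_smul gInv (hΦ i x), Finset.sum_eq_single i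
    (fun j _ hj => by rw [gradSqG_eq_zero_of_notMem_tsupport gInv (hi j hj), mul_zero]) (by simp)]

theorem rayleigh_sum_smul_le [CompactSpace M] [MeasurableSpace M] [OpensMeasurableSpace M]
    (vol μ : Measure M) [IsFiniteMeasure μ] [Nonempty ι] (hΦ : ∀ j, SmoothFn m (Φ j))
    (hdisj : Pairwise (Disjoint on fun i => tsupport (Φ i))) {c : ℝ} (hc : 0 ≤ c)
    (hle : ∀ j, ∫ x, gradSqG gInv (Φ j) x ∂vol ≤ c * ∫ x, Φ j x ^ 2 ∂μ) (a : ι → ℝ) :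
    (∫ x, gradSqG gInv (∑ j, a j • Φ j) x ∂vol) / ∫ x, (∑ j, a j • Φ j) x ^ 2 ∂μ ≤ c := by
  have hden : ∫ x, (∑ j, a j • Φ j) x ^ 2 ∂μ = ∑ j, a j ^ 2 * ∫ x, Φ j x ^ 2 ∂μ := by
    simp_rw [sum_smul_apply_sq_of_pairwise_disjoint hdisj, ← integral_const_mul]
    exact integral_finsetSum _ fun j _ =>
      (continuous_const.mul ((hΦ j).continuous.pow 2)).integrable_of_hasCompactSupport
        (HasCompactSupport.of_compactSpace _)
  simp_rw [gradSqG_sum_smul gInv (fun j => (hΦ j).mdifferentiable (by simp)) hdisj]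
  by_cases hint : Integrable (fun x => ∑ j, a j ^ 2 * gradSqG gInv (Φ j) x) vol
  · refine div_le_of_le_mul₀ (integral_nonneg fun x => sq_nonneg _) hc ?_
    rw [integral_sum_of_pairwise_disjoint (fun j => (isClosed_tsupport (Φ j)).measurableSet) hdisj
      (fun j x hx => by rw [gradSqG_eq_zero_of_notMem_tsupport gInv hx, mul_zero]) hint,
      hden, Finset.mul_sum]
    gcongr with j
    rw [integral_const_mul, mul_left_comm]
    exact mul_le_mul_of_nonneg_left (hle j) (sq_nonneg _)
  · rw [integral_undef hint, zero_div]
    exact hc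

end Rayleigh

section Eigenvalue

variable {m : ℕ} {M : Type*} [TopologicalSpace M] [ChartedSpace (Euc m) M] [MeasurableSpace M]
  {vol μ : Measure M} {gInv : M → Euc m →L[ℝ] Euc m} {k : ℕ}

theorem lambdaK_le_of_forall_rayleigh_le (hne : lambdaK vol gInv k μ ≠ 0) {F : Submodule ℝ (M → ℝ)}
    (hF : Module.finrank ℝ F = k + 1) (hsmooth : ∀ φ ∈ F, SmoothFn m φ) {c : ℝ} (hc : 0 ≤ c)
    (hle : ∀ φ ∈ F, (∫ x, gradSqG gInv φ x ∂vol) / ∫ x, φ x ^ 2 ∂μ ≤ c) :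
    lambdaK vol gInv k μ ≤ c := by
  -- `sInf` of a set that is not bounded below is `0`
  have hbdd : BddBelow {r : ℝ | ∃ F : Submodule ℝ (M → ℝ), Module.finrank ℝ F = k + 1 ∧
      (∀ φ ∈ F, SmoothFn m φ) ∧ r = sSup {s : ℝ | ∃ φ ∈ F,
        s = (∫ x, gradSqG gInv φ x ∂vol) / ∫ x, (φ x) ^ 2 ∂μ}} := by
    by_contra h
    exact hne (Real.sInf_of_not_bddBelow h)
  refine csInf_le_of_le hbdd ⟨F, hF, hsmooth, rfl⟩ (Real.sSup_le ?_ hc)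
  rintro s ⟨φ, hφ, rfl⟩
  exact hle φ hφ

theorem lambdaK_lt_one_of_pairwise_disjoint [CompactSpace M] [OpensMeasurableSpace M]
    [IsFiniteMeasure μ] {ι : Type*} [Fintype ι] (hcard : Fintype.card ι = k + 1)
    {Φ : ι → M → ℝ} (hΦ : ∀ i, SmoothFn m (Φ i))
    (hdisj : Pairwise (Disjoint on fun i => tsupport (Φ i)))
    (hneg : ∀ i, Qform vol μ gInv (Φ i) < 0) :
    lambdaK vol gInv k μ < 1 := by
  have : Nonempty ι := Fintype.card_pos_iff.1 (by omega)
  obtain ⟨c, hc0, hc1, hle⟩ := exists_lt_one_forall_le_mul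
    (fun i => integral_nonneg fun x => sq_nonneg (Φ i x)) fun i => sub_neg.1 (hneg i)
  have hli : LinearIndependent ℝ Φ := linearIndependent_of_pairwise_disjoint_support
    (fun i h0 => (hneg i).ne' (h0 ▸ (Qform_zero gInv vol μ).symm))
    fun i j hij => (hdisj hij).mono (subset_tsupport _) (subset_tsupport _)
  by_contra! h1
  refine hc1.not_ge (h1.trans (lambdaK_le_of_forall_rayleigh_le (by linarith)
    (F := Submodule.span ℝ (Set.range Φ)) ?_ ?_ hc0 ?_))
  · rw [finrank_span_eq_card hli, hcard]
  · intro ψ hψ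
    obtain ⟨a, rfl⟩ := (Submodule.mem_span_range_iff_exists_fun ℝ).1 hψ
    rw [SmoothFn, Finset.sum_fn]
    exact contMDiff_finsetSum fun j _ =>
      (contMDiff_const : ContMDiff (𝓡 m) 𝓘(ℝ, ℝ) (⊤ : ℕ∞) fun _ => a j).smul (hΦ j)
  · intro ψ hψ
    obtain ⟨a, rfl⟩ := (Submodule.mem_span_range_iff_exists_fun ℝ).1 hψ
    exact rayleigh_sum_smul_le gInv vol μ hΦ hdisj hc0 hle a

theorem eventually_not_indexZero_of_not_stablePt {μs : ℕ → Measure M} {p : M}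
    (hp : ¬ StablePt vol gInv μs p) {U : Set M} (hU : IsOpen U) (hpU : p ∈ U) :
    ∀ᶠ n in atTop, ¬ IndexZero vol (μs n) gInv U := by
  refine not_frequently.1 fun h => hp ?_
  obtain ⟨ψ, hψ, hψU⟩ := extraction_of_frequently_atTop h
  exact ⟨U, hU, hpU, ψ, hψ, hψU⟩

end Eigenvalue

theorem at_most_k_unstable_points_general {m : ℕ} {M : Type*} [TopologicalSpace M]
    [ChartedSpace (Euc m) M]
    [CompactSpace M] [T2Space M] [MeasurableSpace M] [BorelSpace M]
    (vol : Measure M)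
    (gInv : M → Euc m →L[ℝ] Euc m)
    (μs : ℕ → Measure M) [∀ n, IsFiniteMeasure (μs n)]
    (k : ℕ) (hlam : ∀ n, lambdaK vol gInv k (μs n) = 1) :
    ∀ S : Finset M, (∀ p ∈ S, ¬ StablePt vol gInv μs p) → S.card ≤ k := by
  intro S hS
  by_contra! hcard
  obtain ⟨T, hTS, hTcard⟩ := Finset.exists_subset_card_eq hcard
  obtain ⟨U, hU, hUdisj⟩ := (T : Set M).toFinite.t2_separation
  obtain ⟨n, hn⟩ := ((eventually_all_finset T).2 fun p hp =>
    eventually_not_indexZero_of_not_stablePt (hS p (hTS hp)) (hU p).2 (hU p).1).exists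
  have hneg : ∀ p : T, ∃ φ, SmoothFn m φ ∧ tsupport φ ⊆ U p ∧ Qform vol (μs n) gInv φ < 0 :=
    fun p => by simpa [IndexZero] using hn p p.2
  choose Φ hΦ hsupp hΦneg using hneg
  have hdisj : Pairwise (Disjoint on fun p : T => tsupport (Φ p)) := fun p q hpq =>
    (hUdisj p.2 q.2 (Subtype.coe_ne_coe.2 hpq)).mono (hsupp p) (hsupp q)
  exact (hlam n).not_lt <| lambdaK_lt_one_of_pairwise_disjoint (by simp [hTcard]) hΦ hdisj hΦneg

theorem at_most_k_unstable_points {m : ℕ} {M : Type*} [TopologicalSpace M]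
    [ChartedSpace (Euc m) M] [IsManifold (𝓡 m) (⊤ : ℕ∞) M]
    [CompactSpace M] [T2Space M] [MeasurableSpace M] [BorelSpace M]
    (vol : Measure M) [IsFiniteMeasure vol]
    (gInv : M → Euc m →L[ℝ] Euc m)
    (μs : ℕ → Measure M) [∀ n, IsFiniteMeasure (μs n)]
    (hna : ∀ n (p : M), μs n {p} = 0)
    (μ : Measure M) (hw : WeakStarMeas μs μ)
    (k : ℕ) (hk : 1 ≤ k) (hlam : ∀ n, lambdaK vol gInv k (μs n) = 1) :
    ∀ S : Finset M, (∀ p ∈ S, ¬ StablePt vol gInv μs p) → S.card ≤ k :=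
  at_most_k_unstable_points_general vol gInv μs k hlam
end

section
/- Let H be a Hilbert space and t a positive self-adjoint trace-class operator on H, written as t = Σᵢ φᵢ ⊗ φᵢ with {φᵢ} orthogonal. Then the trace (nuclear) norm of t equals Σᵢ ‖φᵢ‖², i.e. ‖t‖_N = Tr t = Σᵢ ‖φᵢ‖², and this coincides with the projective tensor norm of t in H ⊗̂_π H. -/
open Filter Topology
open scoped RealInnerProductSpace

noncomputable section

variable {H H₁ H₂ : Type*}

/-- Trace of an operator along a Hilbert basis. -/
def traceAlong [NormedAddCommGroup H] [InnerProductSpace ℝ H] {ι : Type*}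
    (b : HilbertBasis ι ℝ H) (s : H →L[ℝ] H) : ℝ :=
  ∑' i, ⟪s (b i), b i⟫

/-- `t` is nuclear (trace-class) with nuclear (projective) norm at most `C`:
it admits a representation `t = Σ xᵢ ⊗ yᵢ` with `Σ ‖xᵢ‖‖yᵢ‖ ≤ C`. -/
def IsNuclearWith [NormedAddCommGroup H₁] [InnerProductSpace ℝ H₁]
    [NormedAddCommGroup H₂] [InnerProductSpace ℝ H₂]
    (C : ℝ) (t : H₁ →L[ℝ] H₂) : Prop :=
  ∃ (x : ℕ → H₂) (y : ℕ → H₁),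
    Summable (fun i => ‖x i‖ * ‖y i‖) ∧ (∑' i, ‖x i‖ * ‖y i‖) ≤ C ∧
      ∀ z : H₁, HasSum (fun i => ⟪y i, z⟫ • x i) (t z)

/-- `t` is a nuclear (trace-class) operator. -/
def IsNuclear [NormedAddCommGroup H₁] [InnerProductSpace ℝ H₁]
    [NormedAddCommGroup H₂] [InnerProductSpace ℝ H₂] (t : H₁ →L[ℝ] H₂) : Prop :=
  ∃ C, IsNuclearWith C t

/-- The nuclear (trace/projective) norm of `t`. -/
def nuclearNorm [NormedAddCommGroup H₁] [InnerProductSpace ℝ H₁]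
    [NormedAddCommGroup H₂] [InnerProductSpace ℝ H₂] (t : H₁ →L[ℝ] H₂) : ℝ :=
  sInf {C | IsNuclearWith C t}

/-- Weak-* convergence in `N[H] = K[H]*`: testing against every compact operator `q`
via the trace pairing `(q,t) ↦ Tr(q t)`. -/
def WeakStarTendstoN [NormedAddCommGroup H] [InnerProductSpace ℝ H] {ι : Type*}
    (b : HilbertBasis ι ℝ H) (ts : ℕ → H →L[ℝ] H) (t : H →L[ℝ] H) : Prop :=
  ∀ q : H →L[ℝ] H, IsCompactOperator q →
    Tendsto (fun n => traceAlong b (q ∘L ts n)) atTop (𝓝 (traceAlong b (q ∘L t)))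

end

/-!
Expanding in a Hilbert basis, the trace of an operator `z ↦ Σⱼ ⟪yⱼ, z⟫ xⱼ` with
`Σⱼ ‖xⱼ‖‖yⱼ‖ < ∞` is `Σⱼ ⟪yⱼ, xⱼ⟫`: the double series converges absolutely by Cauchy–Schwarz
in `ℓ²`, so the two summations can be exchanged. Hence the trace is bounded by `Σⱼ ‖xⱼ‖‖yⱼ‖`
for every nuclear representation, while the representation `t = Σᵢ φᵢ ⊗ φᵢ` attains the value
`Σᵢ ‖φᵢ‖²` of the trace.
-/

namespace HilbertBasis

variable {ι 𝕜 E : Type*} [RCLike 𝕜] [NormedAddCommGroup E] [InnerProductSpace 𝕜 E]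

theorem summable_norm_inner_mul_norm_inner (b : HilbertBasis ι 𝕜 E) (u v : E) :
    Summable fun i => ‖inner 𝕜 (b i) u‖ * ‖inner 𝕜 (b i) v‖ := by
  simpa only [b.repr_apply_apply] using
    lp.summable_mul (p := 2) (q := 2) (by simpa using Real.HolderConjugate.two_two)
      (b.repr u) (b.repr v)

theorem tsum_norm_inner_mul_norm_inner_le (b : HilbertBasis ι 𝕜 E) (u v : E) :
    ∑' i, ‖inner 𝕜 (b i) u‖ * ‖inner 𝕜 (b i) v‖ ≤ ‖u‖ * ‖v‖ := by
  simpa only [b.repr_apply_apply, LinearIsometryEquiv.norm_map] using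
    lp.tsum_mul_le_mul_norm' (p := 2) (q := 2) (by simpa using Real.HolderConjugate.two_two)
      (b.repr u) (b.repr v)

end HilbertBasis

section Trace

variable {ι H : Type*} [NormedAddCommGroup H] [InnerProductSpace ℝ H]

theorem traceAlong_eq_tsum_inner (b : HilbertBasis ι ℝ H) {t : H →L[ℝ] H} {x y : ℕ → H}
    (hs : Summable fun j => ‖x j‖ * ‖y j‖)
    (hrep : ∀ z : H, HasSum (fun j => ⟪y j, z⟫ • x j) (t z)) :
    traceAlong b t = ∑' j, ⟪y j, x j⟫ := by
  set G : ℕ → ι → ℝ := fun j i => ⟪y j, b i⟫ * ⟪b i, x j⟫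
  have hG : Summable (Function.uncurry G) := by
    refine Summable.of_norm ((summable_prod_of_nonneg fun _ => norm_nonneg _).2 ⟨?_, ?_⟩)
    · intro j
      simpa only [G, Function.uncurry_apply_pair, norm_mul, real_inner_comm (b _) (y j)] using
        b.summable_norm_inner_mul_norm_inner (y j) (x j)
    · refine .of_nonneg_of_le (fun _ => tsum_nonneg fun _ => norm_nonneg _) (fun j => ?_) hs
      simpa only [G, Function.uncurry_apply_pair, norm_mul, real_inner_comm (b _) (y j),
        mul_comm ‖y j‖] using b.tsum_norm_inner_mul_norm_inner_le (y j) (x j)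
  have hcol : ∀ i, HasSum (fun j => G j i) ⟪t (b i), b i⟫ := fun i => by
    simpa only [innerSL_apply_apply, inner_smul_right, real_inner_comm (t (b i))] using
      (hrep (b i)).mapL (innerSL ℝ (b i))
  calc traceAlong b t = ∑' i, ∑' j, G j i := tsum_congr fun i => (hcol i).tsum_eq.symm
    _ = ∑' j, ∑' i, G j i := hG.tsum_comm
    _ = ∑' j, ⟪y j, x j⟫ := tsum_congr fun j => b.tsum_inner_mul_inner (y j) (x j)

theorem traceAlong_le_of_isNuclearWith (b : HilbertBasis ι ℝ H) {C : ℝ} {t : H →L[ℝ] H}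
    (ht : IsNuclearWith C t) : traceAlong b t ≤ C := by
  obtain ⟨x, y, hs, hC, hrep⟩ := ht
  have hle : ∀ j, ⟪y j, x j⟫ ≤ ‖x j‖ * ‖y j‖ := fun j =>
    (real_inner_le_norm _ _).trans_eq (mul_comm _ _)
  have hsum : Summable fun j => ⟪y j, x j⟫ :=
    hs.of_norm_bounded fun j => (norm_inner_le_norm _ _).trans_eq (mul_comm _ _)
  calc traceAlong b t = ∑' j, ⟪y j, x j⟫ := traceAlong_eq_tsum_inner b hs hrep
    _ ≤ ∑' j, ‖x j‖ * ‖y j‖ := hsum.tsum_le_tsum hle hs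
    _ ≤ C := hC

end Trace

theorem isNuclearWith_tsum_norm_sq {H : Type*} [NormedAddCommGroup H] [InnerProductSpace ℝ H]
    {t : H →L[ℝ] H} {φ : ℕ → H} (hsum : Summable fun i => ‖φ i‖ ^ 2)
    (hrep : ∀ z : H, HasSum (fun i => ⟪φ i, z⟫ • φ i) (t z)) :
    IsNuclearWith (∑' i, ‖φ i‖ ^ 2) t :=
  ⟨φ, φ, by simpa only [sq] using hsum, by simp only [sq, le_refl], hrep⟩

theorem trace_norm_of_positive_tensor_general
    [NormedAddCommGroup H] [InnerProductSpace ℝ H]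
    {ι : Type*} (b : HilbertBasis ι ℝ H)
    (t : H →L[ℝ] H) (φ : ℕ → H)
    (hsum : Summable fun i => ‖φ i‖ ^ 2)
    (hrep : ∀ z : H, HasSum (fun i => ⟪φ i, z⟫ • φ i) (t z)) :
    nuclearNorm t = ∑' i, ‖φ i‖ ^ 2 ∧ traceAlong b t = ∑' i, ‖φ i‖ ^ 2 := by
  have htrace : traceAlong b t = ∑' i, ‖φ i‖ ^ 2 := by
    rw [traceAlong_eq_tsum_inner b (by simpa only [sq] using hsum) hrep]
    exact tsum_congr fun i => real_inner_self_eq_norm_sq (φ i)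
  have hleast : IsLeast {C | IsNuclearWith C t} (∑' i, ‖φ i‖ ^ 2) :=
    ⟨isNuclearWith_tsum_norm_sq hsum hrep,
      fun _ hC => htrace ▸ traceAlong_le_of_isNuclearWith b hC⟩
  exact ⟨hleast.csInf_eq, htrace⟩

theorem trace_norm_of_positive_tensor
    [NormedAddCommGroup H] [InnerProductSpace ℝ H] [CompleteSpace H]
    {ι : Type*} (b : HilbertBasis ι ℝ H)
    (t : H →L[ℝ] H) (φ : ℕ → H)
    (horth : Pairwise fun i j => ⟪φ i, φ j⟫ = (0:ℝ))
    (hsum : Summable fun i => ‖φ i‖ ^ 2)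
    (hrep : ∀ z : H, HasSum (fun i => ⟪φ i, z⟫ • φ i) (t z)) :
    nuclearNorm t = ∑' i, ‖φ i‖ ^ 2 ∧ traceAlong b t = ∑' i, ‖φ i‖ ^ 2 :=
  trace_norm_of_positive_tensor_general b t φ hsum hrep
end

section
/- Let Ψ₀ : S^m → S^{m−1} be the equator map (radial projection x ↦ x/|x| for x the first m coordinates), m ≥ 3, and suppose ψ = φ·(1−t²)^{α/2} with α the smaller root of α² − (m−1)α + (m−1) = 0 [i.e. α² − nα + n = 0 with n = m−1], which exists when m ≥ 7. Then the second-variation quadratic form q₀[φ] = ∫_{−1}^{1} φ'(t)² (1−t²)^{m/2} dt − (m−1)∫_{−1}^{1} φ(t)² (1−t²)^{m/2 − 2} dt, after the substitution and integration by parts, transforms into q[ψ] = ∫_{−1}^{1} ψ'(t)² (1−t²)^{m/2−α} dt − (α+m−1)∫_{−1}^{1} ψ(t)² (1−t²)^{m/2−1−α} dt for all φ, ψ ∈ C₀^∞(−1,1) related by φ = ψ(1−t²)^{−α/2}. -/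
open Real MeasureTheory Set intervalIntegral

private lemma cont_aux {f : ℝ → ℝ} {K : Set ℝ}
    (hK : IsClosed K)
    (hf : ContinuousOn f (Set.Ioo (-1:ℝ) 1)) (h0 : ∀ t ∉ K, f t = 0)
    (hKs : K ⊆ Set.Ioo (-1:ℝ) 1) :
    Continuous f := by
  rw [continuous_iff_continuousAt]
  intro t
  by_cases ht : t ∈ Set.Ioo (-1:ℝ) 1
  · exact hf.continuousAt (isOpen_Ioo.mem_nhds ht)
  · have htK : t ∉ K := fun h => ht (hKs h)
    have : f =ᶠ[nhds t] (fun _ => 0) :=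
      Filter.eventually_of_mem (hK.isOpen_compl.mem_nhds htK) (fun x hx => h0 x hx)
    exact this.continuousAt

theorem equator_map_second_variation_substitution (m : ℕ) (hm : 7 ≤ m) (α : ℝ)
    (hroot : α ^ 2 - ((m : ℝ) - 2) * α + ((m : ℝ) - 1) = 0)
    (hmin : ∀ β : ℝ, β ^ 2 - ((m : ℝ) - 2) * β + ((m : ℝ) - 1) = 0 → α ≤ β)
    (ψ φ : ℝ → ℝ) (hψ : ContDiff ℝ (⊤ : ℕ∞) ψ) (hψc : HasCompactSupport ψ)
    (hψs : tsupport ψ ⊆ Set.Ioo (-1 : ℝ) 1)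
    (hφ : ∀ t : ℝ, φ t = ψ t * (1 - t ^ 2) ^ (-(α / 2))) :
    ((∫ t in (-1:ℝ)..1, (deriv φ t) ^ 2 * (1 - t ^ 2) ^ ((m : ℝ) / 2))
        - ((m : ℝ) - 1) * ∫ t in (-1:ℝ)..1, (φ t) ^ 2 * (1 - t ^ 2) ^ ((m : ℝ) / 2 - 2))
      = (∫ t in (-1:ℝ)..1, (deriv ψ t) ^ 2 * (1 - t ^ 2) ^ ((m : ℝ) / 2 - α))
        - (α + (m : ℝ) - 1) *
            ∫ t in (-1:ℝ)..1, (ψ t) ^ 2 * (1 - t ^ 2) ^ ((m : ℝ) / 2 - 1 - α) := by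
  have hφeq : φ = fun s => ψ s * (1 - s ^ 2) ^ (-(α / 2)) := funext hφ
  subst hφeq
  set K : Set ℝ := tsupport ψ with hKdef
  have hKcl : IsClosed K := isClosed_closure
  -- basic vanishing facts
  have h0ψ : ∀ t ∉ K, ψ t = 0 := fun t ht => image_eq_zero_of_notMem_tsupport ht
  have h0ψ' : ∀ t ∉ K, deriv ψ t = 0 := by
    intro t ht
    by_contra h
    exact ht (support_deriv_subset (by simpa [Function.mem_support] using h))
  have hnear : ∀ t ∉ K, (fun s => ψ s * (1 - s ^ 2) ^ (-(α / 2))) =ᶠ[nhds t] (fun _ => 0) := by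
    intro t ht
    refine Filter.eventually_of_mem (hKcl.isOpen_compl.mem_nhds ht) (fun x hx => ?_)
    simp [h0ψ x hx]
  have h0φ : ∀ t ∉ K, (fun s => ψ s * (1 - s ^ 2) ^ (-(α / 2))) t = 0 := by
    intro t ht; simp [h0ψ t ht]
  have h0φ' : ∀ t ∉ K, deriv (fun s => ψ s * (1 - s ^ 2) ^ (-(α / 2))) t = 0 := by
    intro t ht
    rw [Filter.EventuallyEq.deriv_eq (hnear t ht)]; simp
  have hψd : ∀ t : ℝ, HasDerivAt ψ (deriv ψ t) t := fun t => (hψ.differentiable (by simp) t).hasDerivAt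
  have hψcont : Continuous ψ := hψ.continuous
  have hψ'cont : Continuous (deriv ψ) := hψ.continuous_deriv (by simp)
  -- derivative of the base
  have hwd : ∀ t : ℝ, HasDerivAt (fun s : ℝ => 1 - s ^ 2) (-2*t) t := by
    intro t; simpa using ((hasDerivAt_pow 2 t).const_sub 1)
  have hwpos : ∀ t ∈ Set.Ioo (-1:ℝ) 1, (0:ℝ) < 1 - t ^ 2 := by
    intro t ht
    nlinarith [ht.1, ht.2]
  -- derivative of φ on Ioo
  have hφder : ∀ t ∈ Set.Ioo (-1:ℝ) 1,
      HasDerivAt (fun s => ψ s * (1 - s ^ 2) ^ (-(α / 2)))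
        (deriv ψ t * (1 - t ^ 2) ^ (-(α / 2)) + ψ t * (α * t * (1 - t ^ 2) ^ (-(α / 2) - 1))) t := by
    intro t ht
    have hW := hwpos t ht
    have h₃ : HasDerivAt (fun s : ℝ => (1 - s ^ 2) ^ (-(α/2)))
        (-2 * t * (-(α/2)) * (1 - t ^ 2) ^ (-(α/2) - 1)) t :=
      (hwd t).rpow_const (Or.inl hW.ne')
    have : HasDerivAt (fun s => ψ s * (1 - s ^ 2) ^ (-(α/2))) _ t := (hψd t).mul h₃
    convert this using 1
    ring
  have hφderiv : ∀ t ∈ Set.Ioo (-1:ℝ) 1,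
      deriv (fun s => ψ s * (1 - s ^ 2) ^ (-(α / 2))) t
        = deriv ψ t * (1 - t ^ 2) ^ (-(α / 2)) + ψ t * (α * t * (1 - t ^ 2) ^ (-(α / 2) - 1)) :=
    fun t ht => (hφder t ht).deriv
  -- the boundary-term function and its derivative
  set c : ℝ := (m : ℝ) / 2 - α - 1 with hcdef
  set F : ℝ → ℝ := fun t => α * t * (ψ t)^2 * (1 - t ^ 2) ^ c with hFdef
  set G : ℝ → ℝ := fun t =>
      (α * (ψ t)^2 + α * t * (2 * ψ t * deriv ψ t)) * (1 - t ^ 2) ^ c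
        + (α * t * (ψ t)^2) * (-2 * t * c * (1 - t ^ 2) ^ (c - 1)) with hGdef
  have hFd : ∀ t ∈ Set.uIcc (-1:ℝ) 1, HasDerivAt F (G t) t := by
    intro t ht
    by_cases htI : t ∈ Set.Ioo (-1:ℝ) 1
    · have hW := hwpos t htI
      have h₁ : HasDerivAt (fun s : ℝ => α * s) α t := by
        simpa using (hasDerivAt_id t).const_mul α
      have h₂ : HasDerivAt (fun s => (ψ s)^2) (2 * ψ t * deriv ψ t) t := by
        have : HasDerivAt (fun s => (ψ s)^2) _ t := (hψd t).pow 2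
        simpa [mul_comm, mul_assoc, mul_left_comm] using this
      have h₃ : HasDerivAt (fun s : ℝ => (1 - s ^ 2) ^ c)
          (-2 * t * c * (1 - t ^ 2) ^ (c - 1)) t := (hwd t).rpow_const (Or.inl hW.ne')
      have h₁₂ : HasDerivAt (fun s => α * s * (ψ s)^2)
          (α * (ψ t)^2 + α * t * (2 * ψ t * deriv ψ t)) t := h₁.mul h₂
      have h₁₂₃ : HasDerivAt (fun s => α * s * (ψ s)^2 * (1 - s ^ 2) ^ c) _ t := h₁₂.mul h₃
      simpa [hFdef, hGdef] using h₁₂₃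
    · have htK : t ∉ K := fun h => htI (hψs h)
      have hF0 : F =ᶠ[nhds t] (fun _ => 0) := by
        refine Filter.eventually_of_mem (hKcl.isOpen_compl.mem_nhds htK) (fun x hx => ?_)
        simp [hFdef, h0ψ x hx]
      have : HasDerivAt F 0 t := (hasDerivAt_const t (0:ℝ)).congr_of_eventuallyEq hF0
      have hG0 : G t = 0 := by simp [hGdef, h0ψ t htK]
      rw [hG0]; exact this
  -- continuity / integrability of all integrands
  have hconrpow : ∀ e : ℝ, ContinuousOn (fun t : ℝ => (1 - t ^ 2) ^ e) (Set.Ioo (-1:ℝ) 1) := by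
    intro e
    apply ContinuousOn.rpow_const
    · fun_prop
    · intro t ht; exact Or.inl (hwpos t ht).ne'
  have hGcont : Continuous G := by
    apply cont_aux hKcl _ _ hψs
    · apply ContinuousOn.add
      · exact (ContinuousOn.add (by fun_prop) (by fun_prop)).mul (hconrpow c)
      · exact (by fun_prop : ContinuousOn (fun t => α * t * (ψ t)^2) _).mul
          ((by fun_prop : ContinuousOn (fun t : ℝ => -2 * t * c) _).mul (hconrpow (c-1)))
    · intro t ht; simp [hGdef, h0ψ t ht]
  set fA1 : ℝ → ℝ := fun t => (deriv (fun s => ψ s * (1 - s ^ 2) ^ (-(α / 2))) t) ^ 2 * (1 - t ^ 2) ^ ((m : ℝ) / 2) with hA1def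
  set fA2 : ℝ → ℝ := fun t => ((fun s => ψ s * (1 - s ^ 2) ^ (-(α / 2))) t) ^ 2 * (1 - t ^ 2) ^ ((m : ℝ) / 2 - 2) with hA2def
  set fB1 : ℝ → ℝ := fun t => (deriv ψ t) ^ 2 * (1 - t ^ 2) ^ ((m : ℝ) / 2 - α) with hB1def
  set fB2 : ℝ → ℝ := fun t => (ψ t) ^ 2 * (1 - t ^ 2) ^ ((m : ℝ) / 2 - 1 - α) with hB2def
  have hA1cont : Continuous fA1 := by
    apply cont_aux hKcl _ _ hψs
    · apply ContinuousOn.mul _ (hconrpow _)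
      apply ContinuousOn.pow
      apply ContinuousOn.congr _ hφderiv
      exact ((hψ'cont.continuousOn).mul (hconrpow _)).add
        ((hψcont.continuousOn).mul ((by fun_prop : ContinuousOn (fun t : ℝ => α * t) _).mul (hconrpow _)))
    · intro t ht; simp [hA1def, h0φ' t ht]
  have hA2cont : Continuous fA2 := by
    apply cont_aux hKcl _ _ hψs
    · exact (ContinuousOn.pow ((hψcont.continuousOn).mul (hconrpow _)) 2).mul (hconrpow _)
    · intro t ht; simp [hA2def, h0ψ t ht]
  have hB1cont : Continuous fB1 := by
    apply cont_aux hKcl _ _ hψs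
    · exact (ContinuousOn.pow (hψ'cont.continuousOn) 2).mul (hconrpow _)
    · intro t ht; simp [hB1def, h0ψ' t ht]
  have hB2cont : Continuous fB2 := by
    apply cont_aux hKcl _ _ hψs
    · exact (ContinuousOn.pow (hψcont.continuousOn) 2).mul (hconrpow _)
    · intro t ht; simp [hB2def, h0ψ t ht]
  have hIA1 : IntervalIntegrable fA1 volume (-1) 1 := hA1cont.intervalIntegrable _ _
  have hIA2 : IntervalIntegrable fA2 volume (-1) 1 := hA2cont.intervalIntegrable _ _
  have hIB1 : IntervalIntegrable fB1 volume (-1) 1 := hB1cont.intervalIntegrable _ _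
  have hIB2 : IntervalIntegrable fB2 volume (-1) 1 := hB2cont.intervalIntegrable _ _
  have hIG : IntervalIntegrable G volume (-1) 1 := hGcont.intervalIntegrable _ _
  -- ∫ G = 0
  have hGzero : ∫ t in (-1:ℝ)..1, G t = 0 := by
    rw [intervalIntegral.integral_eq_sub_of_hasDerivAt hFd hIG]
    have h1 : (1:ℝ) ∉ K := fun h => by simpa using (hψs h).2
    have h2 : (-1:ℝ) ∉ K := fun h => by simpa using (hψs h).1
    simp [hFdef, h0ψ 1 h1, h0ψ (-1) h2]
  -- the pointwise identity
  have hkey : Set.EqOn (fun t => fA1 t - ((m:ℝ) - 1) * fA2 t)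
      (fun t => fB1 t - (α + (m:ℝ) - 1) * fB2 t + G t) (Set.uIcc (-1:ℝ) 1) := by
    intro t ht
    by_cases htI : t ∈ Set.Ioo (-1:ℝ) 1
    · have hW := hwpos t htI
      set W : ℝ := 1 - t ^ 2 with hWdef
      have hmul : ∀ a b : ℝ, W ^ a * W ^ b = W ^ (a + b) := fun a b => (Real.rpow_add hW a b).symm
      have hstep : ∀ a : ℝ, W ^ (a + 1) = W ^ a * W := fun a => Real.rpow_add_one hW.ne' a
      set E : ℝ := W ^ ((m:ℝ)/2 - α - 2) with hEdef
      set u : ℝ := ψ t with hudef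
      set v : ℝ := deriv ψ t with hvdef
      have h1 : W ^ (-(α/2)) * W ^ (-(α/2)) * W ^ ((m:ℝ)/2) = E * W * W := by
        rw [hmul, hmul, show -(α/2) + -(α/2) + (m:ℝ)/2 = ((m:ℝ)/2 - α - 2) + 1 + 1 by ring,
          hstep, hstep]
      have h2 : W ^ (-(α/2)) * W ^ (-(α/2) - 1) * W ^ ((m:ℝ)/2) = E * W := by
        rw [hmul, hmul, show -(α/2) + (-(α/2) - 1) + (m:ℝ)/2 = ((m:ℝ)/2 - α - 2) + 1 by ring, hstep]
      have h3 : W ^ (-(α/2) - 1) * W ^ (-(α/2) - 1) * W ^ ((m:ℝ)/2) = E := by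
        rw [hmul, hmul, show (-(α/2) - 1) + (-(α/2) - 1) + (m:ℝ)/2 = (m:ℝ)/2 - α - 2 by ring]
      have h4 : W ^ (-(α/2)) * W ^ (-(α/2)) * W ^ ((m:ℝ)/2 - 2) = E := by
        rw [hmul, hmul, show -(α/2) + -(α/2) + ((m:ℝ)/2 - 2) = (m:ℝ)/2 - α - 2 by ring]
      have h5 : W ^ ((m:ℝ)/2 - α) = E * W * W := by
        rw [show (m:ℝ)/2 - α = ((m:ℝ)/2 - α - 2) + 1 + 1 by ring, hstep, hstep]
      have h6 : W ^ ((m:ℝ)/2 - 1 - α) = E * W := by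
        rw [show (m:ℝ)/2 - 1 - α = ((m:ℝ)/2 - α - 2) + 1 by ring, hstep]
      have h7 : W ^ c = E * W := by
        rw [hcdef, show (m:ℝ)/2 - α - 1 = ((m:ℝ)/2 - α - 2) + 1 by ring, hstep]
      have h8 : W ^ (c - 1) = E := by
        rw [hcdef, show (m:ℝ)/2 - α - 1 - 1 = (m:ℝ)/2 - α - 2 by ring]
      simp only [hA1def, hA2def, hB1def, hB2def, hGdef, hφderiv t htI]
      rw [← hWdef, ← hudef, ← hvdef]
      rw [h7, h8]
      -- now express goal and finish with linear_combination
      have expand : (v * W ^ (-(α/2)) + u * (α * t * W ^ (-(α/2) - 1))) ^ 2 * W ^ ((m:ℝ)/2)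
          = v^2 * (W ^ (-(α/2)) * W ^ (-(α/2)) * W ^ ((m:ℝ)/2))
            + 2*α*t*u*v * (W ^ (-(α/2)) * W ^ (-(α/2) - 1) * W ^ ((m:ℝ)/2))
            + α^2*t^2*u^2 * (W ^ (-(α/2) - 1) * W ^ (-(α/2) - 1) * W ^ ((m:ℝ)/2)) := by ring
      have expand2 : (u * W ^ (-(α/2)))^2 * W ^ ((m:ℝ)/2 - 2)
          = u^2 * (W ^ (-(α/2)) * W ^ (-(α/2)) * W ^ ((m:ℝ)/2 - 2)) := by ring
      rw [expand, expand2, h1, h2, h3, h4, h5, h6]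
      have hWt : W = 1 - t^2 := hWdef
      linear_combination (-(E * u^2 * t^2)) * hroot + (u^2 * (α + (m:ℝ) - 1) * E - u^2*(m:ℝ)*E + u^2*α*E*t^2*2 ) * hWt
    · have htK : t ∉ K := fun h => htI (hψs h)
      simp [hA1def, hA2def, hB1def, hB2def, hGdef, h0ψ t htK, h0ψ' t htK, h0φ' t htK]
  -- put everything together
  have eqL : (∫ t in (-1:ℝ)..1, fA1 t) - ((m:ℝ) - 1) * ∫ t in (-1:ℝ)..1, fA2 t
      = ∫ t in (-1:ℝ)..1, (fA1 t - ((m:ℝ) - 1) * fA2 t) := by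
    rw [intervalIntegral.integral_sub hIA1 (hIA2.const_mul _), intervalIntegral.integral_const_mul]
  have eqR : ∫ t in (-1:ℝ)..1, (fB1 t - (α + (m:ℝ) - 1) * fB2 t + G t)
      = (∫ t in (-1:ℝ)..1, fB1 t) - (α + (m:ℝ) - 1) * ∫ t in (-1:ℝ)..1, fB2 t := by
    rw [intervalIntegral.integral_add (hIB1.sub (hIB2.const_mul _)) hIG,
      intervalIntegral.integral_sub hIB1 (hIB2.const_mul _),
      intervalIntegral.integral_const_mul, hGzero, add_zero]
  calc (∫ t in (-1:ℝ)..1, fA1 t) - ((m:ℝ) - 1) * ∫ t in (-1:ℝ)..1, fA2 t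
      = ∫ t in (-1:ℝ)..1, (fA1 t - ((m:ℝ) - 1) * fA2 t) := eqL
    _ = ∫ t in (-1:ℝ)..1, (fB1 t - (α + (m:ℝ) - 1) * fB2 t + G t) :=
        intervalIntegral.integral_congr hkey
    _ = (∫ t in (-1:ℝ)..1, fB1 t) - (α + (m:ℝ) - 1) * ∫ t in (-1:ℝ)..1, fB2 t := eqR
end
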